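/- arXiv:2108.12264 — 6 statements merged into one kernel-verified Lean document; each statement's English description precedes it below -/
import Mathlib

section
/- If G is a finite simple graph on n vertices with minimum degree δ, then the L-Grundy domination number of G satisfies γ_gr^L(G) ≤ n − δ + 1. -/
/-- A list of distinct vertices `s = (v_1, …, v_k)` is an *L-sequence* of `G` if for each `i`,
`N[v_i] \ ⋃_{j<i} N(v_j) ≠ ∅`, i.e. there is a vertex `w` in the closed neighborhood of `v_i`
that lies in no open neighborhood `N(v_j)` for `j < i`. -/
def IsLSeq {V : Type*} (G : SimpleGraph V) (s : List V) : Prop :=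
  s.Nodup ∧ ∀ i : Fin s.length, ∃ w : V,
    (w = s.get i ∨ G.Adj (s.get i) w) ∧
    ∀ j : Fin s.length, j < i → ¬ G.Adj (s.get j) w

/-- The L-Grundy domination number of `G`: the maximum length of an L-sequence of `G`. -/
noncomputable def LGrundy {V : Type*} [Fintype V] (G : SimpleGraph V) : ℕ :=
  sSup {k : ℕ | ∃ s : List V, IsLSeq G s ∧ s.length = k}

theorem lseq_length_le {V : Type*} [Fintype V]
    (G : SimpleGraph V) [DecidableRel G.Adj] (s : List V) (hs : IsLSeq G s) :
    s.length ≤ Fintype.card V - G.minDegree + 1 := by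
  classical
  obtain ⟨hnd, hwit⟩ := hs
  rcases Nat.eq_zero_or_pos s.length with h0 | hpos
  · omega
  -- last index
  set k := s.length with hk
  have hik : k - 1 < k := by omega
  set i : Fin s.length := ⟨k - 1, hik⟩ with hi
  obtain ⟨w, hw1, hw2⟩ := hwit i
  -- the first k-1 vertices
  set A : Finset V := (Finset.Iio i).image (fun j => s.get j) with hA
  have hinj : Function.Injective (fun j : Fin s.length => s.get j) :=
    List.nodup_iff_injective_get.mp hnd
  have hAcard : A.card = k - 1 := by
    rw [hA, Finset.card_image_of_injective _ hinj]
    simp [hi]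
  have hdisj : Disjoint A (G.neighborFinset w) := by
    rw [Finset.disjoint_left]
    intro a ha hmem
    obtain ⟨j, hj, rfl⟩ := Finset.mem_image.mp ha
    have hjlt : j < i := Finset.mem_Iio.mp hj
    exact hw2 j hjlt ((SimpleGraph.mem_neighborFinset G w _).mp hmem).symm
  have hdeg : G.minDegree ≤ (G.neighborFinset w).card := by
    simpa using G.minDegree_le_degree w
  have hcard : A.card + (G.neighborFinset w).card ≤ Fintype.card V := by
    rw [← Finset.card_union_of_disjoint hdisj]
    exact Finset.card_le_univ _
  omega

/-- If `G` is a finite simple graph on `n` vertices with minimum degree `δ`,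
then `γ_gr^L(G) ≤ n − δ + 1`. -/
theorem lgrundy_le_card_sub_minDegree_add_one {V : Type*} [Fintype V]
    (G : SimpleGraph V) [DecidableRel G.Adj] :
    LGrundy G ≤ Fintype.card V - G.minDegree + 1 := by
  have hne : {k : ℕ | ∃ s : List V, IsLSeq G s ∧ s.length = k}.Nonempty :=
    ⟨0, [], ⟨List.nodup_nil, fun i => i.elim0⟩, rfl⟩
  apply csSup_le hne
  rintro k ⟨s, hs, rfl⟩
  exact lseq_length_le G s hs
end

section
/- If G is a finite connected simple graph with γ_gr^L(G) = 2 and (x, y) is an L-sequence of G of length two, then x and y are adjacent in G. -/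
/-- If `G` is connected with `γ_gr^L(G) = 2` and `(x, y)` is an L-sequence of
length two, then `x` and `y` are adjacent. -/
theorem adj_of_lseq_pair_of_lgrundy_eq_two {V : Type*} [Fintype V]
    (G : SimpleGraph V) (hconn : G.Connected) (h2 : LGrundy G = 2)
    (x y : V) (hS : IsLSeq G [x, y]) :
    G.Adj x y := by
  classical
  by_contra hxy
  have hxyne : x ≠ y := by
    have := hS.1
    simp [List.nodup_cons] at this
    tauto
  obtain ⟨p⟩ := hconn x y
  have hpn : ¬ p.Nil := SimpleGraph.Walk.not_nil_of_ne hxyne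
  obtain ⟨z, hz⟩ : ∃ z, z = p.getVert 1 := ⟨_, rfl⟩
  have hxz : G.Adj x z := hz ▸ SimpleGraph.Walk.adj_snd hpn
  have hzx : z ≠ x := hxz.ne'
  have hzy : z ≠ y := by rintro rfl; exact hxy hxz
  have h3 : IsLSeq G [x, y, z] := by
    constructor
    · simp [List.nodup_cons, hxyne, hzx.symm, hzy.symm]
    · intro i
      fin_cases i
      · exact ⟨x, Or.inl rfl, fun j hj => by
          exfalso; have := hj; simp [Fin.lt_def] at this⟩
      · refine ⟨y, Or.inl rfl, fun j hj => ?_⟩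
        fin_cases j
        · exact hxy
        · simp [Fin.lt_def] at hj
        · simp [Fin.lt_def] at hj
      · refine ⟨x, Or.inr hxz.symm, fun j hj => ?_⟩
        fin_cases j
        · exact G.irrefl
        · exact fun h => hxy h.symm
        · simp [Fin.lt_def] at hj
  have hmem : (3 : ℕ) ∈ {k : ℕ | ∃ s : List V, IsLSeq G s ∧ s.length = k} :=
    ⟨[x, y, z], h3, rfl⟩
  have hbdd : BddAbove {k : ℕ | ∃ s : List V, IsLSeq G s ∧ s.length = k} := by
    refine ⟨Fintype.card V, fun k hk => ?_⟩
    obtain ⟨s, hs, rfl⟩ := hk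
    exact hs.1.length_le_card
  have h3le : (3 : ℕ) ≤ LGrundy G := le_csSup hbdd hmem
  rw [h2] at h3le
  omega
end

section
/- If G is a finite connected simple graph on n ≥ 3 vertices, then γ_gr^L(G) = 2 if and only if G is the complete graph K_n (i.e., every two distinct vertices of G are adjacent). -/
private lemma exists_P3 {V : Type*} {G : SimpleGraph V} :
    ∀ {x y : V}, G.Walk x y → x ≠ y → ¬ G.Adj x y →
      ∃ a b c : V, G.Adj a b ∧ G.Adj b c ∧ ¬ G.Adj a c ∧ a ≠ c := by
  intro x y p
  induction p with
  | nil => intro h _; exact absurd rfl h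
  | @cons x z y h q ih =>
    intro hxy hnadj
    by_cases hzy : G.Adj z y
    · exact ⟨x, z, y, h, hzy, hnadj, hxy⟩
    · have hzy' : z ≠ y := by rintro rfl; exact hnadj h
      exact ih hzy' hzy

private lemma lseq_len_le_card {V : Type*} [Fintype V] {G : SimpleGraph V} {s : List V}
    (hs : IsLSeq G s) : s.length ≤ Fintype.card V :=
  hs.1.length_le_card

/-- For a connected graph `G` on `n ≥ 3` vertices, `γ_gr^L(G) = 2` iff `G` is
the complete graph, i.e. every two distinct vertices are adjacent. -/
theorem lgrundy_eq_two_iff_complete {V : Type*} [Fintype V]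
    (G : SimpleGraph V) (hconn : G.Connected) (hn : 3 ≤ Fintype.card V) :
    LGrundy G = 2 ↔ ∀ x y : V, x ≠ y → G.Adj x y := by
  have hbdd : BddAbove {k : ℕ | ∃ s : List V, IsLSeq G s ∧ s.length = k} :=
    ⟨Fintype.card V, by rintro k ⟨s, hs, rfl⟩; exact lseq_len_le_card hs⟩
  constructor
  · intro h2 x y hxy
    by_contra hadj
    obtain ⟨a, b, c, hab, hbc, hac, hac'⟩ :=
      exists_P3 (hconn.preconnected x y).some hxy hadj
    have hca : ¬ G.Adj c a := fun h => hac h.symm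
    have hseq : IsLSeq G [c, a, b] := by
      refine ⟨?_, ?_⟩
      · have h1 : c ≠ a := fun h => hac' h.symm
        have h2 : c ≠ b := hbc.ne'
        have h3 : a ≠ b := hab.ne
        simp [h1, h2, h3]
      · intro i
        fin_cases i
        · exact ⟨c, Or.inl rfl, fun j hj => absurd hj (by simp [Fin.lt_def])⟩
        · refine ⟨a, Or.inl rfl, fun j hj => ?_⟩
          fin_cases j
          · exact hca
          · exact absurd hj (by simp [Fin.lt_def])
          · exact absurd hj (by simp [Fin.lt_def])
        · refine ⟨a, Or.inr hab.symm, fun j hj => ?_⟩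
          fin_cases j
          · exact hca
          · exact G.irrefl
          · exact absurd hj (by simp [Fin.lt_def])
    have h3 : 3 ≤ LGrundy G := le_csSup hbdd ⟨[c, a, b], hseq, rfl⟩
    omega
  · intro hcomp
    obtain ⟨u, v, huv⟩ := Fintype.exists_pair_of_one_lt_card (α := V) (by omega)
    have hseq2 : IsLSeq G [u, v] := by
      refine ⟨by simp [huv], ?_⟩
      intro i
      fin_cases i
      · exact ⟨u, Or.inl rfl, fun j hj => absurd hj (by simp [Fin.lt_def])⟩
      · refine ⟨u, Or.inr (hcomp v u huv.symm), fun j hj => ?_⟩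
        fin_cases j
        · exact G.irrefl
        · exact absurd hj (by simp [Fin.lt_def])
    refine le_antisymm (csSup_le ⟨2, [u, v], hseq2, rfl⟩ ?_) (le_csSup hbdd ⟨[u, v], hseq2, rfl⟩)
    rintro k ⟨s, hs, rfl⟩
    by_contra hk
    push_neg at hk
    have h3 : 3 ≤ s.length := hk
    obtain ⟨w, hw, hj⟩ := hs.2 ⟨2, by omega⟩
    have h0 := hj ⟨0, by omega⟩ (by simp [Fin.lt_def])
    have h1 := hj ⟨1, by omega⟩ (by simp [Fin.lt_def])
    have e0 : s.get ⟨0, by omega⟩ = w := by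
      by_contra hne; exact h0 (hcomp _ _ hne)
    have e1 : s.get ⟨1, by omega⟩ = w := by
      by_contra hne; exact h1 (hcomp _ _ hne)
    have : (⟨0, by omega⟩ : Fin s.length) = ⟨1, by omega⟩ :=
      hs.1.get_inj_iff.mp (e0.trans e1.symm)
    simp [Fin.ext_iff] at this
end

section
/- For every n ≥ 4, there exists a finite simple graph G on n vertices that is not a forest (i.e., G contains a cycle) such that γ_gr^L(G) = n. -/
/-! The paw (the triangle `0, 1, 2` with the pendant vertex `3` attached to `0`) contains a cycle,
and `3, 1, 2, 0` is an L-sequence through all of its vertices, with witnesses `3, 1, 1, 3`.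
Embed the paw into `Fin n`: the remaining vertices are isolated, and an isolated vertex can be
appended to any L-sequence, being its own witness outside every neighbourhood. -/

section

variable {V W : Type*} {G : SimpleGraph V} {s t : List V}

namespace IsLSeq

lemma append_of_isolated (hs : IsLSeq G s) (hst : (s ++ t).Nodup)
    (ht : ∀ v ∈ t, ∀ u, ¬ G.Adj u v) : IsLSeq G (s ++ t) := by
  refine ⟨hst, fun i => ?_⟩
  by_cases hi : i.val < s.length
  · obtain ⟨w, hw, hprev⟩ := hs.2 ⟨i, hi⟩
    refine ⟨w, by simpa [List.getElem_append_left hi] using hw, fun j hj => ?_⟩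
    have hj' : j.val < s.length := lt_trans hj hi
    simpa [List.getElem_append_left hj'] using hprev ⟨j, hj'⟩ hj
  · refine ⟨(s ++ t).get i, Or.inl rfl, fun j _ => ht _ ?_ _⟩
    simp only [List.get_eq_getElem, List.getElem_append_right (not_lt.mp hi)]
    exact List.getElem_mem _

lemma map (f : V ↪ W) (hs : IsLSeq G s) : IsLSeq (G.map f) (s.map f) := by
  refine ⟨hs.1.map f.injective, fun i => ?_⟩
  obtain ⟨w, hw, hprev⟩ := hs.2 (i.cast (List.length_map f))
  refine ⟨f w, by simpa using hw, fun j hj => ?_⟩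
  simpa using hprev (j.cast (List.length_map f)) hj

end IsLSeq

lemma lgrundy_eq_card_of_forall_mem [Fintype V] (hs : IsLSeq G s) (hmem : ∀ v, v ∈ s) :
    LGrundy G = Fintype.card V := by
  classical
  have hlen : s.length = Fintype.card V := by
    rw [← List.toFinset_card_of_nodup hs.1, ← Finset.card_univ]
    exact congrArg Finset.card (Finset.eq_univ_of_forall fun v => List.mem_toFinset.mpr (hmem v))
  refine IsGreatest.csSup_eq ⟨⟨s, hs, hlen⟩, ?_⟩
  rintro k ⟨t, ht, rfl⟩
  exact ht.1.length_le_card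

lemma lgrundy_eq_card_of_isolated [Fintype V] (hs : IsLSeq G s)
    (hiso : ∀ v ∉ s, ∀ u, ¬ G.Adj u v) : LGrundy G = Fintype.card V := by
  classical
  set rest := (Finset.univ.filter (· ∉ s)).toList
  have hnodup : (s ++ rest).Nodup := by
    refine List.nodup_append.mpr ⟨hs.1, Finset.nodup_toList _, ?_⟩
    rintro a ha b hb rfl
    simp_all [rest]
  refine lgrundy_eq_card_of_forall_mem (hs.append_of_isolated hnodup fun v hv => hiso v ?_) ?_
  · simpa [rest] using hv
  · intro v
    by_cases hv : v ∈ s <;> simp [rest, hv]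

lemma lgrundy_map_eq_card [Fintype W] (f : V ↪ W) (hs : IsLSeq G s) (hmem : ∀ v, v ∈ s) :
    LGrundy (G.map f) = Fintype.card W := by
  refine lgrundy_eq_card_of_isolated (hs.map f) ?_
  rintro v hv u ⟨-, a, b, -, -, rfl⟩
  exact hv (List.mem_map_of_mem (hmem b))

end

def paw : SimpleGraph (Fin 4) := SimpleGraph.fromRel fun a b => a = 0 ∨ (a = 1 ∧ b = 2)

instance : DecidableRel paw.Adj := by unfold paw; infer_instance

lemma isLSeq_paw : IsLSeq paw [3, 1, 2, 0] := by
  unfold IsLSeq; decide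

lemma not_isAcyclic_paw : ¬ paw.IsAcyclic :=
  fun h => h.cliqueFree le_rfl (t := {0, 1, 2}) (by decide)

/-- For every `n ≥ 4` there is a graph on `n` vertices which is not a forest
(i.e. contains a cycle) whose L-Grundy domination number equals `n`. -/
theorem exists_non_forest_lgrundy_eq_card (n : ℕ) (hn : 4 ≤ n) :
    ∃ G : SimpleGraph (Fin n), ¬ G.IsAcyclic ∧ LGrundy G = n := by
  refine ⟨paw.map (Fin.castLEEmb hn), fun h => not_isAcyclic_paw (h.of_map _), ?_⟩
  simpa using lgrundy_map_eq_card (Fin.castLEEmb hn) isLSeq_paw (by decide)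
end

section
/- For every n ≥ 3, the cycle C_n on n vertices satisfies γ_gr^L(C_n) = n − 1. -/
/-!
In a graph of minimum degree at least two no L-sequence lists every vertex: the witness `w` of
the last vertex `v` has a neighbour other than `v`, which would then have been listed earlier.
So `γ_gr^L(C_n) ≤ n - 1`, and an explicit ordering of all vertices but one attains the bound.
-/

variable {V : Type*} {G : SimpleGraph V}

theorem isLSeq_iff_take {s : List V} :
    IsLSeq G s ↔ s.Nodup ∧ ∀ i (hi : i < s.length), ∃ w,
      (w = s[i] ∨ G.Adj s[i] w) ∧ ∀ u ∈ s.take i, ¬ G.Adj u w := by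
  refine and_congr_right fun _ => ⟨fun h i hi => ?_, fun h i => ?_⟩
  · obtain ⟨w, hw, hfree⟩ := h ⟨i, hi⟩
    refine ⟨w, hw, fun u hu => ?_⟩
    obtain ⟨j, hj, rfl⟩ := List.mem_iff_getElem.1 hu
    simp only [List.length_take] at hj
    simpa using hfree ⟨j, by omega⟩ (Fin.mk_lt_mk.2 (by omega))
  · obtain ⟨w, hw, hfree⟩ := h i i.2
    refine ⟨w, hw, fun j hj => hfree _ ?_⟩
    exact List.mem_iff_getElem.2 ⟨j, by simp; omega, by simp⟩

theorem isLSeq_nil : IsLSeq G [] := by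
  simp [isLSeq_iff_take]

theorem isLSeq_append_singleton {s : List V} {v : V} :
    IsLSeq G (s ++ [v]) ↔
      IsLSeq G s ∧ v ∉ s ∧ ∃ w, (w = v ∨ G.Adj v w) ∧ ∀ u ∈ s, ¬ G.Adj u w := by
  simp only [isLSeq_iff_take, List.nodup_append, List.nodup_singleton, List.mem_singleton,
    List.length_append, List.length_singleton, Nat.lt_succ_iff_lt_or_eq]
  have hlow : ∀ i (hi : i < s.length),
      (s ++ [v])[i]'(by simp; omega) = s[i] ∧ (s ++ [v]).take i = s.take i :=
    fun i hi => ⟨List.getElem_append_left hi, List.take_append_of_le_length hi.le⟩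
  have htop : (s ++ [v])[s.length] = v ∧ (s ++ [v]).take s.length = s :=
    ⟨List.getElem_concat_length rfl _, List.take_left' rfl⟩
  constructor
  · rintro ⟨⟨hnd, -, hv⟩, h⟩
    refine ⟨⟨hnd, fun i hi => ?_⟩, fun hvs => hv v hvs v rfl rfl, ?_⟩
    · simpa only [hlow i hi] using h i (Or.inl hi)
    · simpa only [htop] using h s.length (Or.inr rfl)
  · rintro ⟨⟨hnd, h⟩, hv, hlast⟩
    refine ⟨⟨hnd, trivial, fun a ha b hb => hb ▸ fun hav => hv (hav ▸ ha)⟩, ?_⟩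
    rintro i (hi | rfl)
    · simpa only [hlow i hi] using h i hi
    · simpa only [htop] using hlast

theorem IsLSeq.length_lt_card [Fintype V] [Nonempty V] [DecidableRel G.Adj]
    (hdeg : ∀ w, 2 ≤ G.degree w) {s : List V} (hs : IsLSeq G s) :
    s.length < Fintype.card V := by
  rcases s.eq_nil_or_concat with rfl | ⟨t, v, rfl⟩
  · exact Fintype.card_pos
  rw [List.concat_eq_append] at hs ⊢
  obtain ⟨-, -, w, -, hfree⟩ := isLSeq_append_singleton.1 hs
  obtain ⟨u, hu, huv⟩ := Finset.exists_mem_ne (hdeg w) v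
  rw [SimpleGraph.mem_neighborFinset] at hu
  have hut : u ∉ t := fun hut => hfree u hut hu.symm
  have hnd : (u :: (t ++ [v])).Nodup := List.nodup_cons.2 ⟨by simp [hut, huv], hs.1⟩
  simpa using hnd.length_le_card

theorem lgrundy_eq_length_of_forall_length_le {s : List V} [Fintype V] (hs : IsLSeq G s)
    (hmax : ∀ t, IsLSeq G t → t.length ≤ s.length) : LGrundy G = s.length :=
  IsGreatest.csSup_eq ⟨⟨s, hs, rfl⟩, by rintro _ ⟨t, ht, rfl⟩; exact hmax t ht⟩

open Fin.NatCast

theorem Fin.mem_map_natCast_range {n k : ℕ} [NeZero n] (hk : k ≤ n) {u : Fin n} :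
    u ∈ (List.range k).map (Nat.cast : ℕ → Fin n) ↔ u.val < k := by
  simp only [List.mem_map, List.mem_range]
  constructor
  · rintro ⟨a, ha, rfl⟩
    rwa [Fin.val_cast_of_lt (by omega)]
  · exact fun hu => ⟨u.val, hu, Fin.cast_val_eq_self u⟩

namespace SimpleGraph

theorem cycleGraph_not_adj_of_val_add_one_lt {n : ℕ} {u w : Fin n} (huw : u.val + 1 < w.val)
    (hw : w.val + 1 < n) : ¬ (cycleGraph n).Adj u w := by
  have hlt : u < w := Fin.lt_def.2 (by omega)
  rw [cycleGraph_adj', Fin.coe_sub_iff_lt.2 hlt, Fin.coe_sub_iff_le.2 hlt.le]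
  omega

theorem cycleGraph_adj_of_val_add_one_eq {n : ℕ} {u w : Fin n} (h : u.val + 1 = w.val) :
    (cycleGraph n).Adj u w :=
  pathGraph_le_cycleGraph (pathGraph_adj.2 (Or.inl h))

theorem isLSeq_cycleGraph_range {n k : ℕ} [NeZero n] (hk : k + 1 < n) :
    IsLSeq (cycleGraph n) ((List.range k).map (Nat.cast : ℕ → Fin n)) := by
  induction k with
  | zero => exact isLSeq_nil
  | succ k ih =>
    have hk' : (k : Fin n).val = k := Fin.val_cast_of_lt (by omega)
    have hk1 : ((k + 1 : ℕ) : Fin n).val = k + 1 := Fin.val_cast_of_lt (by omega)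
    rw [List.range_succ, List.map_append, List.map_singleton, isLSeq_append_singleton,
      Fin.mem_map_natCast_range (by omega)]
    refine ⟨ih (by omega), by omega, ((k + 1 : ℕ) : Fin n),
      Or.inr (cycleGraph_adj_of_val_add_one_eq (by omega)), fun u hu => ?_⟩
    rw [Fin.mem_map_natCast_range (by omega)] at hu
    exact cycleGraph_not_adj_of_val_add_one_lt (by omega) (by omega)

/-- The vertices `0, 1, …, m - 1, m + 1, m` of `C_{m+3}`: the first `m` are witnessed by their
successors, `m + 1` by itself, and `m` by `m + 1`, whose other neighbour `m + 2` is never listed. -/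
def cycleLSeq (m : ℕ) : List (Fin (m + 3)) :=
  (List.range m).map (Nat.cast : ℕ → Fin (m + 3)) ++ [((m + 1 : ℕ) : Fin (m + 3))] ++
    [(m : Fin (m + 3))]

theorem length_cycleLSeq (m : ℕ) : (cycleLSeq m).length = m + 2 := by
  simp [cycleLSeq]

theorem isLSeq_cycleLSeq (m : ℕ) : IsLSeq (cycleGraph (m + 3)) (cycleLSeq m) := by
  set top : Fin (m + 3) := ((m + 1 : ℕ) : Fin (m + 3))
  have htop : top.val = m + 1 := Fin.val_cast_of_lt (by omega)
  have hm : (m : Fin (m + 3)).val = m := Fin.val_cast_of_lt (by omega)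
  have hnot_adj_top : ∀ u ∈ (List.range m).map (Nat.cast : ℕ → Fin (m + 3)),
      ¬ (cycleGraph (m + 3)).Adj u top := fun u hu => by
    rw [Fin.mem_map_natCast_range (by omega)] at hu
    exact cycleGraph_not_adj_of_val_add_one_lt (by omega) (by omega)
  rw [cycleLSeq, isLSeq_append_singleton, isLSeq_append_singleton]
  refine ⟨⟨isLSeq_cycleGraph_range (by omega), ?_, top, Or.inl rfl, hnot_adj_top⟩, ?_,
    top, Or.inr (cycleGraph_adj_of_val_add_one_eq (by omega)), ?_⟩
  · rw [Fin.mem_map_natCast_range (by omega)]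
    omega
  · rw [List.mem_append, Fin.mem_map_natCast_range (by omega), List.mem_singleton, Fin.ext_iff]
    omega
  · intro u hu
    rcases List.mem_append.1 hu with hu | hu
    · exact hnot_adj_top u hu
    · exact List.mem_singleton.1 hu ▸ SimpleGraph.irrefl _

end SimpleGraph

/-- For every `n ≥ 3`, the cycle `C_n` satisfies `γ_gr^L(C_n) = n − 1`. -/
theorem lgrundy_cycleGraph (n : ℕ) (hn : 3 ≤ n) :
    LGrundy (SimpleGraph.cycleGraph n) = n - 1 := by
  obtain ⟨m, rfl⟩ : ∃ m, n = m + 3 := ⟨n - 3, by omega⟩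
  rw [show m + 3 - 1 = m + 2 by omega, ← SimpleGraph.length_cycleLSeq m]
  refine lgrundy_eq_length_of_forall_length_le (SimpleGraph.isLSeq_cycleLSeq m) fun t ht => ?_
  have hlt := ht.length_lt_card fun _ => SimpleGraph.cycleGraph_degree_three_le.ge
  rw [Fintype.card_fin] at hlt
  rw [SimpleGraph.length_cycleLSeq]
  omega
end

section
/- If H is an induced subgraph of a finite simple graph G, then γ_gr^L(H) ≤ γ_gr^L(G). -/
/-- If `H` is an induced subgraph of `G`, then `γ_gr^L(H) ≤ γ_gr^L(G)`. -/
theorem lgrundy_induce_le {V : Type*} [Fintype V]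
    (G : SimpleGraph V) (s : Set V) [Fintype s] :
    LGrundy (G.induce s) ≤ LGrundy G := by
  apply csSup_le_csSup
  · exact ⟨Fintype.card V, fun k ⟨l, hl, hlen⟩ => hlen ▸ List.Nodup.length_le_card hl.1⟩
  · exact ⟨0, [], ⟨List.nodup_nil, fun i => Fin.elim0 i⟩, rfl⟩
  · rintro k ⟨l, ⟨hnd, hseq⟩, hlen⟩
    refine ⟨l.map Subtype.val, ⟨hnd.map Subtype.val_injective, ?_⟩, by simpa using hlen⟩
    intro i
    have hli : (l.map Subtype.val).length = l.length := by simp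
    set i' : Fin l.length := Fin.cast hli i with hi'
    obtain ⟨w, hw, hwj⟩ := hseq i'
    refine ⟨w.1, ?_, ?_⟩
    · have hget : (l.map Subtype.val).get i = (l.get i').1 := by
        simp only [List.get_eq_getElem, List.getElem_map, i', Fin.coe_cast]
      rcases hw with h | h
      · left; rw [hget, h]
      · right; rw [hget]; exact h
    · intro j hj hadj
      set j' : Fin l.length := Fin.cast hli j with hj'
      have hgetj : (l.map Subtype.val).get j = (l.get j').1 := by
        simp only [List.get_eq_getElem, List.getElem_map, j', Fin.coe_cast]
      refine hwj j' (by simpa [i', j'] using hj) ?_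
      rw [hgetj] at hadj
      exact hadj
end
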